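/- Let L be a number field that is Galois over ℚ with Galois group Gal(L/ℚ) isomorphic to the symmetric group S₄. Let φ : L →+* ℂ be an embedding and let σ ∈ Gal(L/ℚ) be the associated complex conjugation, i.e. φ ∘ σ = conj ∘ φ where conj is complex conjugation on ℂ; assume σ ≠ id. Let H be a subgroup of Gal(L/ℚ) isomorphic to the symmetric group S₃ with σ ∈ H, and let E = L^H be the fixed field of H. Then E is not totally real; more precisely, E has exactly two real embeddings and exactly one conjugate pair of complex embeddings. -/

import Mathlib

open IntermediateField NumberField

set_option maxHeartbeats 1000000 in
private lemma perm4_card_six : ∀ σ c : Equiv.Perm (Fin 4),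
    (σ * σ = 1 ∧ σ ≠ 1 ∧ c * (c * c) = 1 ∧ c ≠ 1) →
    ({1, c, c * c, σ, σ * c, σ * (c * c)} : Finset (Equiv.Perm (Fin 4))).card = 6 := by
  decide

set_option maxHeartbeats 4000000 in
private lemma perm4_count : ∀ σ c : Equiv.Perm (Fin 4),
    (σ * σ = 1 ∧ σ ≠ 1 ∧ c * (c * c) = 1 ∧ c ≠ 1 ∧
      σ * (c * σ) ∈ ({1, c, c * c, σ, σ * c, σ * (c * c)} : Finset (Equiv.Perm (Fin 4)))) →
    (Finset.univ.filter (fun τ : Equiv.Perm (Fin 4) =>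
      τ⁻¹ * (σ * τ) ∈ ({1, c, c * c, σ, σ * c, σ * (c * c)} : Finset (Equiv.Perm (Fin 4))))).card
      = 12 := by
  decide

private lemma count_aux {α β : Type*} [Fintype α] (f : α → β) (hf : Function.Surjective f)
    (P : β → Prop) (k : ℕ) (hfib : ∀ b : β, Nat.card {a // f a = b} = k) :
    Nat.card {b // P b} * k = Nat.card {a // P (f a)} := by
  classical
  have hfin : Finite β := Finite.of_surjective f hf
  cases nonempty_fintype β
  have e : {a // P (f a)} ≃ Σ b : {b // P b}, {a // f a = b.1} :=
    { toFun := fun a => ⟨⟨f a.1, a.2⟩, ⟨a.1, rfl⟩⟩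
      invFun := fun x => ⟨x.2.1, by rw [x.2.2]; exact x.1.2⟩
      left_inv := fun a => rfl
      right_inv := fun x => by
        rcases x with ⟨⟨b, hb⟩, ⟨a, ha⟩⟩
        change f a = b at ha
        subst ha
        rfl }
  rw [Nat.card_congr e]
  simp only [Nat.card_eq_fintype_card] at hfib ⊢
  rw [Fintype.card_sigma, Finset.sum_congr rfl (fun b _ => hfib b.1), Finset.sum_const,
    Finset.card_univ, smul_eq_mul]

set_option maxHeartbeats 1000000 in
/-- Let `L/ℚ` be Galois with group `S₄`, let `σ` be the complex conjugation
attached to an embedding `φ : L →+* ℂ`, with `σ ≠ 1`, and let `H ≅ S₃` be a subgroup containing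
`σ`, with fixed field `E = L^H`.  Then `E` is not totally real; more precisely `E` has exactly
two real embeddings and exactly one conjugate pair of complex (non-real) embeddings. -/
theorem fixedField_not_totally_real
    (L : Type) [Field L] [NumberField L] [IsGalois ℚ L]
    (hGal : Nonempty ((L ≃ₐ[ℚ] L) ≃* Equiv.Perm (Fin 4)))
    (φ : L →+* ℂ) (σ : L ≃ₐ[ℚ] L)
    (hσ : ∀ x : L, φ (σ x) = starRingEnd ℂ (φ x))
    (hσ1 : σ ≠ 1)
    (H : Subgroup (L ≃ₐ[ℚ] L))
    (hH : Nonempty (H ≃* Equiv.Perm (Fin 3)))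
    (hσH : σ ∈ H) :
    (¬ ∀ ψ : IntermediateField.fixedField H →+* ℂ, ComplexEmbedding.IsReal ψ) ∧
      Nat.card {ψ : IntermediateField.fixedField H →+* ℂ // ComplexEmbedding.IsReal ψ} = 2 ∧
      Nat.card {ψ : IntermediateField.fixedField H →+* ℂ // ¬ ComplexEmbedding.IsReal ψ} = 2 := by
  classical
  obtain ⟨e⟩ := hGal
  obtain ⟨e3⟩ := hH
  -- σ is an involution
  have hσ2 : σ * σ = 1 := by
    ext x
    apply φ.injective
    show φ (σ (σ x)) = φ ((1 : L ≃ₐ[ℚ] L) x)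
    rw [hσ, hσ, Complex.conj_conj]
    rfl
  -- an element of order 3 in H
  obtain ⟨c', hc'3, hc'1⟩ : ∃ x : Equiv.Perm (Fin 3), x * (x * x) = 1 ∧ x ≠ 1 := by decide
  set c : L ≃ₐ[ℚ] L := ((e3.symm c' : H) : L ≃ₐ[ℚ] L) with hc_def
  have hcH : c ∈ H := (e3.symm c').2
  have hc3 : c * (c * c) = 1 := by
    have h1 : e3.symm c' * (e3.symm c' * e3.symm c') = 1 := by
      rw [← map_mul, ← map_mul, hc'3, map_one]
    have h2 := congrArg (Subtype.val) h1
    simpa using h2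
  have hc1 : c ≠ 1 := by
    intro h
    apply hc'1
    have h2 : e3.symm c' = (1 : H) := by
      apply Subtype.val_injective
      simpa [hc_def] using h
    have h3 := congrArg e3 h2
    simpa using h3
  -- Nat.card H = 6
  have hH6 : Nat.card H = 6 := by
    rw [Nat.card_congr e3.toEquiv, Nat.card_eq_fintype_card]
    decide
  -- the finset S
  set S : Finset (L ≃ₐ[ℚ] L) := {1, c, c * c, σ, σ * c, σ * (c * c)} with hS_def
  have hSsubH : ∀ x ∈ S, x ∈ H := by
    intro x hx
    simp only [hS_def, Finset.mem_insert, Finset.mem_singleton] at hx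
    rcases hx with rfl | rfl | rfl | rfl | rfl | rfl
    · exact one_mem H
    · exact hcH
    · exact mul_mem hcH hcH
    · exact hσH
    · exact mul_mem hσH hcH
    · exact mul_mem hσH (mul_mem hcH hcH)
  -- transfer to Perm (Fin 4)
  have heσ2 : e σ * e σ = 1 := by rw [← map_mul, hσ2, map_one]
  have heσ1 : e σ ≠ 1 := by
    intro h; apply hσ1
    have h2 := congrArg e.symm h; simpa using h2
  have hec3 : e c * (e c * e c) = 1 := by rw [← map_mul, ← map_mul, hc3, map_one]
  have hec1 : e c ≠ 1 := by
    intro h; apply hc1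
    have h2 := congrArg e.symm h; simpa using h2
  have hSimage : S.image e = ({1, e c, e c * e c, e σ, e σ * e c, e σ * (e c * e c)} :
      Finset (Equiv.Perm (Fin 4))) := by
    simp [hS_def, Finset.image_insert, map_mul, map_one]
  have hScard : S.card = 6 := by
    rw [← Finset.card_image_of_injective S e.injective, hSimage]
    exact perm4_card_six (e σ) (e c) ⟨heσ2, heσ1, hec3, hec1⟩
  -- H = S
  have hmemHS : ∀ x : L ≃ₐ[ℚ] L, x ∈ H ↔ x ∈ S := by
    have hsub : S ⊆ (H : Set (L ≃ₐ[ℚ] L)).toFinset := by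
      intro x hx; rw [Set.mem_toFinset]; exact hSsubH x hx
    have hcard : (H : Set (L ≃ₐ[ℚ] L)).toFinset.card ≤ S.card := by
      rw [hScard, Set.toFinset_card]
      have h4 : Fintype.card (H : Set (L ≃ₐ[ℚ] L)) = Nat.card H := by
        rw [← Nat.card_eq_fintype_card]; rfl
      rw [h4, hH6]
    have heq := Finset.eq_of_subset_of_card_le hsub hcard
    intro x
    rw [heq]
    simp [Set.mem_toFinset]
  -- membership transfer through e
  have himg : ∀ x : L ≃ₐ[ℚ] L, x ∈ S ↔ e x ∈ ({1, e c, e c * e c, e σ, e σ * e c,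
      e σ * (e c * e c)} : Finset (Equiv.Perm (Fin 4))) := by
    intro x
    rw [← hSimage]
    constructor
    · exact fun hx => Finset.mem_image_of_mem e hx
    · intro hx
      obtain ⟨y, hy, hyx⟩ := Finset.mem_image.mp hx
      rwa [← e.injective hyx]
  -- σ c σ ∈ the image finset
  have hconj_mem' : e σ * (e c * e σ) ∈ ({1, e c, e c * e c, e σ, e σ * e c,
      e σ * (e c * e c)} : Finset (Equiv.Perm (Fin 4))) := by
    have h5 : σ * (c * σ) ∈ S := by
      rw [← hmemHS]; exact mul_mem hσH (mul_mem hcH hσH)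
    have h6 := (himg _).mp h5
    rwa [map_mul, map_mul] at h6
  -- counts in Perm (Fin 4)
  have hfilter12 : (Finset.univ.filter (fun τ : Equiv.Perm (Fin 4) =>
      τ⁻¹ * (e σ * τ) ∈ ({1, e c, e c * e c, e σ, e σ * e c, e σ * (e c * e c)} :
        Finset (Equiv.Perm (Fin 4))))).card = 12 :=
    perm4_count (e σ) (e c) ⟨heσ2, heσ1, hec3, hec1, hconj_mem'⟩
  -- the Galois correspondence, membership form
  have hfix : IntermediateField.fixingSubgroup (IntermediateField.fixedField H) = H :=
    IntermediateField.fixingSubgroup_fixedField H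
  have hmemfix : ∀ g : L ≃ₐ[ℚ] L, g ∈ H ↔ ∀ x ∈ IntermediateField.fixedField H, g x = x := by
    intro g
    conv_lhs => rw [← hfix]
    exact IntermediateField.mem_fixingSubgroup_iff _ g
  -- the predicate on the Galois group
  set p : (L ≃ₐ[ℚ] L) → Prop := fun τ => τ⁻¹ * (σ * τ) ∈ H with hp_def
  have hpcount : Nat.card {τ : L ≃ₐ[ℚ] L // p τ} = 12 := by
    have hiff : ∀ τ : L ≃ₐ[ℚ] L, p τ ↔ (e τ)⁻¹ * (e σ * e τ) ∈ ({1, e c, e c * e c, e σ,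
        e σ * e c, e σ * (e c * e c)} : Finset (Equiv.Perm (Fin 4))) := by
      intro τ
      show τ⁻¹ * (σ * τ) ∈ H ↔ _
      rw [hmemHS, himg, map_mul, map_mul, map_inv]
    rw [Nat.card_congr (Equiv.subtypeEquiv (q := fun π : Equiv.Perm (Fin 4) =>
        π⁻¹ * (e σ * π) ∈ ({1, e c, e c * e c, e σ, e σ * e c, e σ * (e c * e c)} :
        Finset (Equiv.Perm (Fin 4)))) e.toEquiv (fun τ => hiff τ)),
      Nat.card_eq_fintype_card, Fintype.card_subtype]
    exact hfilter12
  have hnpcount : Nat.card {τ : L ≃ₐ[ℚ] L // ¬ p τ} = 12 := by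
    have hiff : ∀ τ : L ≃ₐ[ℚ] L, ¬ p τ ↔ ¬ ((e τ)⁻¹ * (e σ * e τ) ∈ ({1, e c, e c * e c, e σ,
        e σ * e c, e σ * (e c * e c)} : Finset (Equiv.Perm (Fin 4)))) := by
      intro τ
      have h20 : p τ ↔ τ⁻¹ * (σ * τ) ∈ H := Iff.rfl
      rw [h20, hmemHS, himg, map_mul, map_mul, map_inv]
    rw [Nat.card_congr (Equiv.subtypeEquiv (q := fun π : Equiv.Perm (Fin 4) =>
        ¬ (π⁻¹ * (e σ * π) ∈ ({1, e c, e c * e c, e σ, e σ * e c, e σ * (e c * e c)} :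
        Finset (Equiv.Perm (Fin 4))))) e.toEquiv (fun τ => hiff τ)),
      Nat.card_eq_fintype_card, Fintype.card_subtype]
    rw [Finset.filter_not, Finset.card_sdiff_of_subset (Finset.filter_subset _ _), Finset.card_univ,
      hfilter12]
    decide
  -- the restriction map
  set F : (L ≃ₐ[ℚ] L) → (IntermediateField.fixedField H →+* ℂ) := fun τ =>
    φ.comp (τ.toAlgHom.toRingHom.comp (algebraMap (IntermediateField.fixedField H) L))
    with hF_def
  have hFapp : ∀ (τ : L ≃ₐ[ℚ] L) (x : IntermediateField.fixedField H),
      F τ x = φ (τ (x : L)) := fun τ x => rfl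
  -- F τ = F τ' iff same coset
  have hFeq : ∀ τ τ' : L ≃ₐ[ℚ] L, F τ = F τ' ↔ τ⁻¹ * τ' ∈ H := by
    intro τ τ'
    rw [hmemfix]
    constructor
    · intro h x hx
      have h7 := congrArg (fun g => g ⟨x, hx⟩) h
      simp only [hFapp] at h7
      have h8 : τ ((⟨x, hx⟩ : IntermediateField.fixedField H) : L) =
          τ' ((⟨x, hx⟩ : IntermediateField.fixedField H) : L) := φ.injective h7
      show τ.symm (τ' x) = x
      rw [← h8]
      exact τ.symm_apply_apply x
    · intro h
      ext x
      rw [hFapp, hFapp]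
      have h9 : τ.symm (τ' (x : L)) = (x : L) := h (x : L) x.2
      have h10 := congrArg τ h9
      rw [τ.apply_symm_apply] at h10
      exact (congrArg φ h10).symm
  -- realness criterion
  have hFreal : ∀ τ : L ≃ₐ[ℚ] L, ComplexEmbedding.IsReal (F τ) ↔ p τ := by
    intro τ
    rw [ComplexEmbedding.isReal_iff]
    have h20 : p τ ↔ τ⁻¹ * (σ * τ) ∈ H := Iff.rfl
    rw [h20, hmemfix]
    constructor
    · intro h x hx
      have h7 := congrArg (fun g => g ⟨x, hx⟩) h
      simp only [ComplexEmbedding.conjugate_coe_eq, hFapp] at h7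
      rw [← hσ] at h7
      have h8 := φ.injective h7
      show τ.symm (σ (τ x)) = x
      rw [h8]
      exact τ.symm_apply_apply x
    · intro h
      ext x
      simp only [ComplexEmbedding.conjugate_coe_eq, hFapp]
      rw [← hσ]
      have h9 : τ.symm (σ (τ (x : L))) = (x : L) := h (x : L) x.2
      have h10 := congrArg τ h9
      rw [τ.apply_symm_apply] at h10
      exact congrArg φ h10
  -- surjectivity of F
  letI : Algebra L ℂ := φ.toAlgebra
  have halg : algebraMap L ℂ = φ := rfl
  letI : IsScalarTower ℚ L ℂ := IsScalarTower.of_algebraMap_eq (fun x => by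
    have : (algebraMap ℚ ℂ) = (algebraMap L ℂ).comp (algebraMap ℚ L) :=
      Subsingleton.elim _ _
    rw [this]; rfl)
  have hFsurj : Function.Surjective F := by
    intro ψ
    letI : Algebra (IntermediateField.fixedField H) ℂ := ψ.toAlgebra
    haveI : @NoZeroSMulDivisors (IntermediateField.fixedField H) ℂ _ _ Algebra.toSMul :=
      @NoZeroSMulDivisors.mk _ _ _ _ Algebra.toSMul (fun {c x} h => by
        change ψ c * x = 0 at h
        rcases mul_eq_zero.mp h with h1 | h1
        · exact Or.inl ((map_eq_zero ψ).mp h1)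
        · exact Or.inr h1)
    haveI : @NoZeroSMulDivisors (IntermediateField.fixedField H) L _ _ Algebra.toSMul :=
      inferInstance
    haveI : Algebra.IsAlgebraic (IntermediateField.fixedField H) L :=
      Algebra.IsAlgebraic.of_finite _ _
    let Θ : L →ₐ[IntermediateField.fixedField H] ℂ := IsAlgClosed.lift
    let f : L →ₐ[ℚ] ℂ := (Θ.toRingHom).toRatAlgHom
    refine ⟨Normal.algHomEquivAut ℚ ℂ L f, ?_⟩
    have h10 : (Normal.algHomEquivAut ℚ ℂ L).symm (Normal.algHomEquivAut ℚ ℂ L f) = f :=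
      Equiv.symm_apply_apply _ _
    have h11 : ∀ y : L, φ ((Normal.algHomEquivAut ℚ ℂ L f) y) = Θ y := by
      intro y
      have := congrArg (fun g => g y) h10
      exact this
    ext x
    rw [hFapp, h11]
    show Θ (algebraMap (IntermediateField.fixedField H) L x) = ψ x
    rw [Θ.commutes]
    rfl
  -- fibers of F have size 6
  have hfib : ∀ ψ : IntermediateField.fixedField H →+* ℂ,
      Nat.card {τ : L ≃ₐ[ℚ] L // F τ = ψ} = 6 := by
    intro ψ
    obtain ⟨τ₀, rfl⟩ := hFsurj ψ
    have eq1 : {τ : L ≃ₐ[ℚ] L // F τ = F τ₀} ≃ H :=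
      { toFun := fun τ => ⟨τ₀⁻¹ * τ.1, by
          have := (hFeq τ₀ τ.1).mp τ.2.symm
          exact this⟩
        invFun := fun h => ⟨τ₀ * h.1, by
          have h12 : (τ₀ * (h.1 : L ≃ₐ[ℚ] L))⁻¹ * τ₀ = (h.1 : L ≃ₐ[ℚ] L)⁻¹ := by group
          refine (hFeq (τ₀ * h.1) τ₀).mpr ?_
          rw [h12]
          exact inv_mem h.2⟩
        left_inv := fun τ => by
          apply Subtype.ext
          show τ₀ * (τ₀⁻¹ * τ.1) = τ.1
          group
        right_inv := fun h => by
          apply Subtype.ext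
          show τ₀⁻¹ * (τ₀ * h.1) = h.1
          group }
    rw [Nat.card_congr eq1, hH6]
  -- put everything together
  have hreal : Nat.card {ψ : IntermediateField.fixedField H →+* ℂ //
      ComplexEmbedding.IsReal ψ} = 2 := by
    have h13 : Nat.card {ψ : IntermediateField.fixedField H →+* ℂ //
        ComplexEmbedding.IsReal ψ} * 6 = Nat.card {τ : L ≃ₐ[ℚ] L //
        ComplexEmbedding.IsReal (F τ)} :=
      count_aux F hFsurj (fun ψ => ComplexEmbedding.IsReal ψ) 6 hfib
    rw [Nat.card_congr (Equiv.subtypeEquivRight hFreal), hpcount] at h13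
    omega
  have hnreal : Nat.card {ψ : IntermediateField.fixedField H →+* ℂ //
      ¬ ComplexEmbedding.IsReal ψ} = 2 := by
    have h13 : Nat.card {ψ : IntermediateField.fixedField H →+* ℂ //
        ¬ ComplexEmbedding.IsReal ψ} * 6 = Nat.card {τ : L ≃ₐ[ℚ] L //
        ¬ ComplexEmbedding.IsReal (F τ)} :=
      count_aux F hFsurj (fun ψ => ¬ ComplexEmbedding.IsReal ψ) 6 hfib
    rw [Nat.card_congr (Equiv.subtypeEquivRight (fun τ => not_congr (hFreal τ))),
      hnpcount] at h13
    omega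
  refine ⟨?_, hreal, hnreal⟩
  intro hall
  have : IsEmpty {ψ : IntermediateField.fixedField H →+* ℂ // ¬ ComplexEmbedding.IsReal ψ} :=
    ⟨fun x => x.2 (hall x.1)⟩
  rw [Nat.card_of_isEmpty] at hnreal
  exact two_ne_zero hnreal.symm
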